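/- Let N ≥ 1, let λ be a σ-finite Borel measure on ℝ^N, let M > 0 and let r : ℝ^N → (0, ∞) be measurable with r(x) ≤ M for all x, and let β ≥ 2 be such that for every x ∈ ℝ^N, sup{ r(x+v) : v ∈ ℝ^N, |v| ≤ 2M } ≤ (β−1)·r(x). Then for every γ ≥ 0, ∫_{ℝ^N} ∫_{ℝ^N} |x−y|^γ · 1{|x−y| ≤ r(x)+r(y)} dλ(y) dλ(x) ≤ β^γ · ∫_{ℝ^N} r(x)^γ · λ(B̄(x, β·r(x))) dλ(x), where the inequality is understood in [0,∞]. -/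

import Mathlib

open Real MeasureTheory ENNReal

section PowerLengthKernel

variable {E : Type*} [SeminormedAddCommGroup E] {r : E → ℝ} {M β : ℝ}

/-- Such a pair is `2M`-close since `r ≤ M`, so the regularity condition gives
`r y ≤ (β - 1) r x`. -/
theorem norm_sub_le_mul_of_le_add (hrM : ∀ x, r x ≤ M)
    (hreg : ∀ x v, ‖v‖ ≤ 2 * M → r (x + v) ≤ (β - 1) * r x) {x y : E}
    (h : ‖x - y‖ ≤ r x + r y) : ‖x - y‖ ≤ β * r x := by
  have hry : r y ≤ (β - 1) * r x := by
    have hv : ‖y - x‖ ≤ 2 * M := by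
      rw [norm_sub_rev]; linarith [hrM x, hrM y]
    simpa using hreg x (y - x) hv
  linarith

variable [MeasurableSpace E] [OpensMeasurableSpace E]

theorem lintegral_powLengthKernel_le (μ : Measure E) {γ R : ℝ} (hγ : 0 ≤ γ) (x : E)
    (hR : ∀ y, ‖x - y‖ ≤ r x + r y → ‖x - y‖ ≤ R) :
    ∫⁻ y, ENNReal.ofReal (‖x - y‖ ^ γ * (if ‖x - y‖ ≤ r x + r y then (1 : ℝ) else 0)) ∂μ ≤
      ENNReal.ofReal (R ^ γ) * μ (Metric.closedBall x R) := by
  have hpointwise : ∀ y,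
      ENNReal.ofReal (‖x - y‖ ^ γ * (if ‖x - y‖ ≤ r x + r y then (1 : ℝ) else 0)) ≤
        (Metric.closedBall x R).indicator (fun _ => ENNReal.ofReal (R ^ γ)) y := by
    intro y
    split_ifs with h
    · have hxy := hR y h
      have hmem : y ∈ Metric.closedBall x R := by
        rwa [Metric.mem_closedBall, dist_comm, dist_eq_norm]
      rw [Set.indicator_of_mem hmem, mul_one]
      exact ENNReal.ofReal_le_ofReal (Real.rpow_le_rpow (norm_nonneg _) hxy hγ)
    · simp
  calc _ ≤ ∫⁻ y, (Metric.closedBall x R).indicator (fun _ => ENNReal.ofReal (R ^ γ)) y ∂μ :=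
        lintegral_mono hpointwise
    _ = _ := lintegral_indicator_const Metric.isClosed_closedBall.measurableSet _

end PowerLengthKernel

theorem stmt_6 (N : ℕ)
    (lam : Measure (EuclideanSpace ℝ (Fin N)))
    (M : ℝ)
    (r : EuclideanSpace ℝ (Fin N) → ℝ)
    (hrpos : ∀ x, 0 < r x) (hrM : ∀ x, r x ≤ M)
    (β : ℝ) (hβ : 2 ≤ β)
    (hreg : ∀ x v, ‖v‖ ≤ 2 * M → r (x + v) ≤ (β - 1) * r x)
    (γ : ℝ) (hγ : 0 ≤ γ) :
    (∫⁻ x, ∫⁻ y, ENNReal.ofReal (‖x - y‖ ^ γ *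
        (if ‖x - y‖ ≤ r x + r y then (1 : ℝ) else 0)) ∂lam ∂lam) ≤
      ENNReal.ofReal (β ^ γ) *
        ∫⁻ x, ENNReal.ofReal (r x ^ γ) * lam (Metric.closedBall x (β * r x)) ∂lam := by
  calc _ ≤ ∫⁻ x, ENNReal.ofReal ((β * r x) ^ γ) * lam (Metric.closedBall x (β * r x)) ∂lam :=
        lintegral_mono fun x => lintegral_powLengthKernel_le lam hγ x
          fun _ => norm_sub_le_mul_of_le_add hrM hreg
    _ = _ := by
        rw [← lintegral_const_mul' _ _ ENNReal.ofReal_ne_top]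
        congr 1 with x
        rw [Real.mul_rpow (by linarith) (hrpos x).le,
          ENNReal.ofReal_mul (Real.rpow_nonneg (by linarith) γ), mul_assoc]
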